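/- arXiv:2504.18394 — 3 statements merged into one kernel-verified Lean document; each statement's English description precedes it below -/
import Mathlib

section
/- Greedy submodular maximization with multiplicatively approximate oracle: let f be a monotone nonnegative submodular function on subsets of [d] with f(∅)=0, and suppose the greedy algorithm for k rounds selects at each round an element whose evaluated marginal gain (according to an oracle returning values in [(1−γ)f(S), (1+γ)f(S)] for each queried set S) is maximal. If γ = ε/(4k) with ε ∈ (0,1), then the resulting set G of size k satisfies f(G) ≥ (1 − 1/e − ε) · max_{|S|=k} f(S). -/
/-!
Greedy with an approximate oracle is `c`-approximate greedy for `c = (1 - γ)/(1 + γ)`: the chosen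
set is worth at least `c` times any one-element extension of the current set. Summing the
marginal gains of the elements of an optimal set `S` (submodularity) gives, for `B = G i`,
`c (f S - f B) ≤ k (f (G (i+1)) - c f B)`, i.e. the gap `f S - f (G i)` contracts by `1 - c/k` up
to an additive error `(1 - c) f (G i) ≤ 2γ f (G k)`. After `k` rounds the gap is at most
`(1 - c/k)^k f S + (ε/2) f (G k)`, and `(1 - c/k)^k ≤ exp (-c) ≤ 1/e + 2γ`.
-/

open Finset Real

variable {α : Type*} [DecidableEq α]

def IsSubmodular (f : Finset α → ℝ) : Prop :=
  ∀ S T e, S ⊆ T → e ∉ T → f (insert e T) - f T ≤ f (insert e S) - f S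

namespace IsSubmodular

variable {f : Finset α → ℝ}

theorem union_sub_le_sum_marginal (hf : IsSubmodular f) (S B : Finset α) :
    f (S ∪ B) - f B ≤ ∑ x ∈ S, (f (insert x B) - f B) := by
  induction S using Finset.induction_on with
  | empty => simp
  | @insert a S haS ih =>
    rw [sum_insert haS, insert_union]
    by_cases haB : a ∈ B
    · rw [insert_eq_of_mem (mem_union_right S haB), insert_eq_of_mem haB]
      linarith
    · have := hf B (S ∪ B) a subset_union_right (by simp [haS, haB])
      linarith

theorem mul_sub_le_card_mul (hf : IsSubmodular f) (hmono : Monotone f) {c : ℝ} (hc : 0 ≤ c)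
    {B B' : Finset α} (hB' : ∀ x, c * f (insert x B) ≤ f B') (S : Finset α) :
    c * (f S - f B) ≤ #S * (f B' - c * f B) := calc
  c * (f S - f B) ≤ c * (f (S ∪ B) - f B) := by
    gcongr; exact hmono subset_union_left
  _ ≤ c * ∑ x ∈ S, (f (insert x B) - f B) := by
    gcongr; exact hf.union_sub_le_sum_marginal S B
  _ ≤ ∑ _x ∈ S, (f B' - c * f B) := by
    rw [mul_sum]; gcongr with x; linarith [hB' x]
  _ = #S * (f B' - c * f B) := by rw [sum_const, nsmul_eq_mul]

end IsSubmodular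

theorem le_pow_mul_add_of_le_mul_add {a : ℕ → ℝ} {r δ : ℝ} (hr0 : 0 ≤ r) (hr1 : r ≤ 1)
    (hδ : 0 ≤ δ) {n : ℕ} (h : ∀ i < n, a (i + 1) ≤ r * a i + δ) : a n ≤ r ^ n * a 0 + n * δ := by
  induction n with
  | zero => simp
  | succ n ih =>
    have ih := ih fun i hi ↦ h i (by omega)
    have : r * (n * δ) ≤ n * δ := mul_le_of_le_one_left (by positivity) hr1
    calc a (n + 1) ≤ r * a n + δ := h n (by omega)
      _ ≤ r * (r ^ n * a 0 + n * δ) + δ := by gcongr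
      _ = r ^ (n + 1) * a 0 + r * (n * δ) + δ := by ring
      _ ≤ r ^ (n + 1) * a 0 + (n + 1 : ℕ) * δ := by push_cast; linarith

theorem exp_neg_le_exp_neg_one_add {c : ℝ} (hc0 : 0 ≤ c) (hc1 : c ≤ 1) :
    exp (-c) ≤ exp (-1) + (1 - c) := by
  have hconv : c * exp (-c) ≤ exp (-1) := calc
    c * exp (-c) = (1 + (-1 - -c)) * exp (-c) := by ring
    _ ≤ exp (-1 - -c) * exp (-c) := by gcongr; linarith [add_one_le_exp (-1 - -c)]
    _ = exp (-1) := by rw [← exp_add]; ring_nf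
  have : exp (-c) ≤ 1 := exp_le_one_iff.mpr (by linarith)
  nlinarith

theorem mul_le_of_approxOracle_argmax {f g : Finset α → ℝ} {γ : ℝ} (hγ : -1 < γ)
    (hg : ∀ S, (1 - γ) * f S ≤ g S ∧ g S ≤ (1 + γ) * f S) {B : Finset α} {e : α}
    (he : ∀ x, g (insert x B) - g B ≤ g (insert e B) - g B) (x : α) :
    (1 - γ) / (1 + γ) * f (insert x B) ≤ f (insert e B) := by
  rw [div_mul_eq_mul_div, div_le_iff₀ (by linarith), mul_comm _ (1 + γ)]
  linarith [(hg (insert x B)).1, (hg (insert e B)).2, he x]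

theorem approxGreedy_gap_le {f : Finset α → ℝ} (hf : IsSubmodular f) (hmono : Monotone f)
    {c : ℝ} (hc0 : 0 ≤ c) (hc1 : c ≤ 1) {k : ℕ} (hk : 0 < k) (G : ℕ → Finset α)
    (hG0 : 0 ≤ f (G 0))
    (hstep : ∀ i < k, ∃ e, G (i + 1) = insert e (G i) ∧
      ∀ x, c * f (insert x (G i)) ≤ f (G (i + 1)))
    (S : Finset α) (hS : #S = k) :
    f S - f (G k) ≤ (1 - c / k) ^ k * (f S - f (G 0)) + k * ((1 - c) * f (G k)) := by
  have hkR : (0 : ℝ) < k := by exact_mod_cast hk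
  have hchain : ∀ i ≤ k, f (G i) ≤ f (G k) := by
    have : Monotone fun n ↦ f (G (min n k)) := monotone_nat_of_le_succ fun n ↦ by
      rcases lt_or_ge n k with hn | hn
      · obtain ⟨e, he, -⟩ := hstep n hn
        simpa [min_eq_left hn.le, min_eq_left (Nat.succ_le_of_lt hn), he] using
          hmono (subset_insert e (G n))
      · simp [min_eq_right hn, min_eq_right (hn.trans n.le_succ)]
    intro i hi
    simpa [min_eq_left hi] using this hi
  refine le_pow_mul_add_of_le_mul_add (a := fun i ↦ f S - f (G i)) ?_ ?_ ?_ fun i hi ↦ ?_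
  · exact sub_nonneg.mpr (div_le_one_of_le₀ (hc1.trans (Nat.one_le_cast.mpr hk)) hkR.le)
  · exact sub_le_self _ (by positivity)
  · exact mul_nonneg (by linarith) (hG0.trans (hchain 0 k.zero_le))
  · obtain ⟨-, -, hB'⟩ := hstep i hi
    have hgain := hf.mul_sub_le_card_mul hmono hc0 hB' S
    rw [hS] at hgain
    have herr : (1 - c) * f (G i) ≤ (1 - c) * f (G k) :=
      mul_le_mul_of_nonneg_left (hchain i hi.le) (by linarith)
    have : f S - f (G (i + 1)) ≤ (1 - c / k) * (f S - f (G i)) + (1 - c) * f (G i) := by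
      rw [← mul_le_mul_iff_of_pos_left hkR]
      field_simp
      nlinarith
    linarith

/-- Greedy submodular maximization with a multiplicatively `(1 ± γ)`-approximate oracle `g`,
with `γ = ε/(4k)`, yields a `(1 − 1/e − ε)`-approximation. -/
theorem stmt9 (d k : ℕ) (hk : 1 ≤ k) (ε γ : ℝ) (hε : ε ∈ Set.Ioo (0 : ℝ) 1)
    (hγ : γ = ε / (4 * k))
    (f g : Finset (Fin d) → ℝ)
    (hf0 : f ∅ = 0) (hfnn : ∀ S, 0 ≤ f S)
    (hmono : ∀ S T, S ⊆ T → f S ≤ f T)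
    (hsub : ∀ S T : Finset (Fin d), ∀ e : Fin d, S ⊆ T → e ∉ T →
      f (insert e T) - f T ≤ f (insert e S) - f S)
    (hg : ∀ S, (1 - γ) * f S ≤ g S ∧ g S ≤ (1 + γ) * f S)
    (G : ℕ → Finset (Fin d)) (hG0 : G 0 = ∅)
    (hstep : ∀ i < k, ∃ e, e ∉ G i ∧ G (i + 1) = insert e (G i) ∧
      ∀ e', g (insert e' (G i)) - g (G i) ≤ g (insert e (G i)) - g (G i)) :
    ∀ S : Finset (Fin d), S.card = k →
      (1 - 1 / Real.exp 1 - ε) * f S ≤ f (G k) := by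
  intro S hS
  obtain ⟨hε0, hε1⟩ := hε
  have hkR : (1 : ℝ) ≤ k := by exact_mod_cast hk
  have hγ0 : 0 ≤ γ := by rw [hγ]; positivity
  have h2γk : 2 * γ * k = ε / 2 := by rw [hγ]; field_simp; ring
  have hγ1 : γ ≤ 1 := by nlinarith
  set c := (1 - γ) / (1 + γ) with hc
  have hc0 : 0 ≤ c := div_nonneg (by linarith) (by linarith)
  have hc1 : c ≤ 1 := div_le_one_of_le₀ (by linarith) (by linarith)
  have h1c : 1 - c ≤ 2 * γ := by
    rw [hc, one_sub_div (by linarith), div_le_iff₀ (by linarith)]; nlinarith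
  have hgap := approxGreedy_gap_le hsub (hmono · ·) hc0 hc1 hk G (by simp [hG0, hf0])
    (fun i hi ↦ by
      obtain ⟨e, -, hGe, he⟩ := hstep i hi
      exact ⟨e, hGe, hGe ▸ mul_le_of_approxOracle_argmax (by linarith) hg he⟩) S hS
  rw [hG0, hf0, sub_zero] at hgap
  have hpow : (1 - c / k) ^ k ≤ exp (-1) + ε / 2 :=
    (one_sub_div_pow_le_exp_neg (hc1.trans hkR)).trans
      ((exp_neg_le_exp_neg_one_add hc0 hc1).trans (by nlinarith))
  have hfS := hfnn S
  have hfG := hfnn (G k)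
  have herr : k * ((1 - c) * f (G k)) ≤ ε / 2 * f (G k) := by
    rw [← mul_assoc, ← h2γk]
    exact mul_le_mul_of_nonneg_right (by nlinarith) hfG
  have hmain : (1 - exp (-1) - ε / 2) * f S ≤ (1 + ε / 2) * f (G k) := by
    linarith [mul_le_mul_of_nonneg_right hpow hfS]
  rw [one_div, ← exp_neg]
  nlinarith [mul_nonneg (mul_nonneg hε0.le (exp_pos (-1)).le) hfS,
    mul_nonneg (mul_nonneg hε0.le hε0.le) hfS]
end

section
/- Bound on the number of large items: suppose the maximum coverage optimum with k subsets on an instance is OPT. If ℓ items each lie in at least d/k of the d input subsets, then ℓ ≤ 2 · OPT. -/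
open Finset

private lemma aux_pow (a n : ℕ) : a^(n+1) + (n+1) * a^n ≤ (a+1)^(n+1) := by
  induction n with
  | zero => simp
  | succ n ih =>
    calc a^(n+2) + (n+2)*a^(n+1)
        ≤ (a+1) * (a^(n+1) + (n+1)*a^n) := by
          have h : a^(n+2) = a * a^(n+1) := by ring
          have h2 : a^(n+1) = a * a^n := by ring
          nlinarith [Nat.zero_le (a^n), Nat.zero_le (a^(n+1))]
      _ ≤ (a+1) * (a+1)^(n+1) := Nat.mul_le_mul_left _ ih
      _ = (a+1)^(n+2) := by ring

private lemma two_pow_le (k : ℕ) (hk : 1 ≤ k) : 2 * (k-1)^k ≤ k^k := by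
  obtain ⟨a, rfl⟩ := Nat.exists_eq_add_of_le hk
  have h := aux_pow a a
  have hsub : (1 + a) - 1 = a := by omega
  rw [hsub]
  have hpow : a^(1+a) = a * a^a := by rw [Nat.add_comm, pow_succ]; ring
  have h2 : a * a^a ≤ (a+1) * a^a := Nat.mul_le_mul_right _ (Nat.le_succ a)
  calc 2 * a^(1+a) = a * a^a + a * a^a := by rw [hpow]; ring
    _ ≤ a^(a+1) + (a+1) * a^a := by
        have h3 : a^(a+1) = a * a^a := by rw [pow_succ]; ring
        omega
    _ ≤ (a+1)^(a+1) := h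
    _ = (1+a)^(1+a) := by ring_nf

/-- Bound on the number of large items: if every choice of `k` of the `d` subsets
covers at most `OPT` items, and `L` is the set of items each belonging to at least
`d/k` of the subsets, then `|L| ≤ 2 · OPT`. -/
theorem stmt11 (U : Type*) [Fintype U] [DecidableEq U] (d k OPT : ℕ)
    (hk : 1 ≤ k) (hkd : k ≤ d) (S : Fin d → Finset U)
    (hOPT : ∀ C : Finset (Fin d), C.card = k → (C.biUnion S).card ≤ OPT)
    (L : Finset U)
    (hL : ∀ i ∈ L, d ≤ k * (Finset.univ.filter fun j : Fin d => i ∈ S j).card) :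
    L.card ≤ 2 * OPT := by
  have hd : 1 ≤ d := le_trans hk hkd
  -- greedy step: for any R ⊆ L there is a subset covering ≥ |R|/k of R
  have step : ∀ R : Finset U, R ⊆ L → ∃ j : Fin d, R.card ≤ k * (S j ∩ R).card := by
    intro R hR
    have hne : (Finset.univ : Finset (Fin d)).Nonempty := by
      rw [Finset.univ_nonempty_iff]
      exact Fin.pos_iff_nonempty.mp hd
    by_contra hcon
    push_neg at hcon
    obtain ⟨j0, _⟩ := hne
    have hR1 : 1 ≤ R.card := lt_of_le_of_lt (Nat.zero_le _) (hcon j0)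
    have key : ∀ j : Fin d, (S j ∩ R).card = ∑ i ∈ R, (if i ∈ S j then 1 else 0) := by
      intro j
      rw [Finset.inter_comm, ← Finset.filter_mem_eq_inter, Finset.card_filter]
    have hswap : ∑ j : Fin d, (S j ∩ R).card
        = ∑ i ∈ R, (Finset.univ.filter fun j : Fin d => i ∈ S j).card := by
      simp only [key]
      rw [Finset.sum_comm]
      exact Finset.sum_congr rfl fun i _ => (Finset.card_filter _ _).symm
    have hlow : d * R.card ≤ k * ∑ j : Fin d, (S j ∩ R).card := by
      rw [hswap, Finset.mul_sum]
      calc d * R.card = ∑ _i ∈ R, d := by rw [Finset.sum_const, smul_eq_mul, Nat.mul_comm]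
        _ ≤ _ := Finset.sum_le_sum fun i hi => hL i (hR hi)
    have hup : k * ∑ j : Fin d, (S j ∩ R).card ≤ d * (R.card - 1) := by
      rw [Finset.mul_sum]
      calc ∑ j : Fin d, k * (S j ∩ R).card ≤ ∑ _j : Fin d, (R.card - 1) :=
            Finset.sum_le_sum fun j _ => by have := hcon j; omega
        _ = d * (R.card - 1) := by simp [Finset.sum_const, Nat.mul_comm]
    have hlt : d * (R.card - 1) < d * R.card :=
      (Nat.mul_lt_mul_left (by omega)).mpr (by omega)
    exact absurd (le_trans hlow hup) (not_le.mpr hlt)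
  -- main greedy induction
  have main : ∀ t : ℕ, ∃ C : Finset (Fin d), C.card ≤ t ∧
      k^t * (L \ C.biUnion S).card ≤ (k-1)^t * L.card := by
    intro t
    induction t with
    | zero => exact ⟨∅, by simp⟩
    | succ t ih =>
      obtain ⟨C, hC, hle⟩ := ih
      set R := L \ C.biUnion S with hRdef
      obtain ⟨j, hj⟩ := step R Finset.sdiff_subset
      refine ⟨insert j C, le_trans (Finset.card_insert_le _ _) (by omega), ?_⟩
      have hRe : L \ (insert j C).biUnion S = R \ S j := by
        rw [Finset.biUnion_insert, hRdef]
        ext x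
        simp only [Finset.mem_sdiff, Finset.mem_union]
        tauto
      rw [hRe]
      have h1 : k * (R \ S j).card ≤ (k-1) * R.card := by
        have hcard : (R \ S j).card + (R ∩ S j).card = R.card :=
          Finset.card_sdiff_add_card_inter R (S j)
        have hj' : R.card ≤ k * (R ∩ S j).card := by rwa [Finset.inter_comm] at hj
        have e1 : k * (R \ S j).card + k * (R ∩ S j).card = k * R.card := by
          rw [← Nat.mul_add, hcard]
        have e2 : (k-1) * R.card = k * R.card - R.card := by
          rw [Nat.sub_mul, one_mul]
        omega
      calc k^(t+1) * (R \ S j).card = k^t * (k * (R \ S j).card) := by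
            rw [pow_succ]; ring
        _ ≤ k^t * ((k-1) * R.card) := Nat.mul_le_mul_left _ h1
        _ = (k-1) * (k^t * R.card) := by ring
        _ ≤ (k-1) * ((k-1)^t * L.card) := Nat.mul_le_mul_left _ hle
        _ = (k-1)^(t+1) * L.card := by rw [pow_succ]; ring
  -- conclude
  obtain ⟨C, hCcard, hfin⟩ := main k
  have h2 := two_pow_le k hk
  have hRL : 2 * (L \ C.biUnion S).card ≤ L.card := by
    have hkk : 0 < k^k := pow_pos (by omega) k
    have hmul : k^k * (2 * (L \ C.biUnion S).card) ≤ k^k * L.card := by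
      calc k^k * (2 * (L \ C.biUnion S).card)
          = 2 * (k^k * (L \ C.biUnion S).card) := by ring
        _ ≤ 2 * ((k-1)^k * L.card) := Nat.mul_le_mul_left _ hfin
        _ = (2 * (k-1)^k) * L.card := by ring
        _ ≤ k^k * L.card := Nat.mul_le_mul_right _ h2
    exact Nat.le_of_mul_le_mul_left hmul hkk
  obtain ⟨C', hCC', -, hC'card⟩ := Finset.exists_subsuperset_card_eq
    (Finset.subset_univ C) hCcard (by simpa using hkd)
  have hOC := hOPT C' hC'card
  have hsub : L \ C'.biUnion S ⊆ L \ C.biUnion S :=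
    Finset.sdiff_subset_sdiff (Finset.Subset.refl L) (Finset.biUnion_subset_biUnion_of_subset_left S hCC')
  have h3 : 2 * (L \ C'.biUnion S).card ≤ L.card :=
    le_trans (Nat.mul_le_mul_left 2 (Finset.card_le_card hsub)) hRL
  have h4 : L.card - (C'.biUnion S).card ≤ (L \ C'.biUnion S).card :=
    Finset.le_card_sdiff _ _
  have h5 : L.card ≤ (L \ C'.biUnion S).card + (C'.biUnion S).card :=
    Finset.card_le_card_sdiff_add_card
  omega
end

section
/- Bound on nonzero entries among small items: let S_1, …, S_d be subsets of a universe with max coverage optimum OPT for parameter k. If every item in a set M (the 'small' items) lies in fewer than d/k of the subsets, then the total number of (item, subset) incidences among items of M is at most 2 · (d/k) · OPT. -/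
/-!
Call an item covered once it lies in one of the chosen subsets. Greedily pick, `k` times, a
not yet chosen subset covering the largest number of uncovered items of `M`. By pigeonhole over
the `d` subsets, each pick newly covers at least `1/d` times the number of incidences of the
uncovered items; since that number only decreases, after `k` picks it is at most `d/k` times the
number of covered items.
The covered items themselves each have fewer than `d/k` incidences, and there are at most `OPT`
of them.
-/

open Finset

namespace MaxCoverage

variable {U ι : Type*} [DecidableEq U] [Fintype ι]

def degree (S : ι → Finset U) (i : U) : ℕ := #{j | i ∈ S j}

theorem sum_degree_eq_sum_card_inter (S : ι → Finset U) (A : Finset U) :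
    ∑ i ∈ A, degree S i = ∑ j, #(A ∩ S j) := by
  simp only [degree, card_filter, ← filter_mem_eq_inter]
  exact sum_comm

theorem exists_notMem_sum_degree_le [DecidableEq ι] (S : ι → Finset U) (A : Finset U)
    {D : Finset ι} (hA : ∀ j ∈ D, Disjoint A (S j)) (hD : #D < Fintype.card ι) :
    ∃ j ∉ D, ∑ i ∈ A, degree S i ≤ Fintype.card ι * #(A ∩ S j) := by
  have hne : Dᶜ.Nonempty := card_pos.1 (by rw [card_compl]; omega)
  obtain ⟨j, hj, hmax⟩ := Dᶜ.exists_max_image (fun j => #(A ∩ S j)) hne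
  refine ⟨j, mem_compl.1 hj, ?_⟩
  have hzero : ∀ j' ∈ (univ : Finset ι), j' ∉ Dᶜ → #(A ∩ S j') = 0 := by
    intro j' _ hj'
    rw [card_eq_zero, ← disjoint_iff_inter_eq_empty]
    exact hA j' (by simpa using hj')
  calc ∑ i ∈ A, degree S i = ∑ j ∈ Dᶜ, #(A ∩ S j) := by
        rw [sum_degree_eq_sum_card_inter, sum_subset (subset_univ _) hzero]
    _ ≤ #Dᶜ • #(A ∩ S j) := sum_le_card_nsmul _ _ _ hmax
    _ ≤ Fintype.card ι * #(A ∩ S j) := by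
        rw [smul_eq_mul]
        exact Nat.mul_le_mul_right _ (card_le_univ _)

theorem card_inter_union_eq (M T B : Finset U) :
    #(M ∩ (T ∪ B)) = #(M ∩ B) + #((M \ B) ∩ T) := by
  rw [← card_union_of_disjoint]
  · congr 1
    ext i
    simp only [mem_inter, mem_union, mem_sdiff]
    tauto
  · exact disjoint_left.2 fun i hi hi' => (mem_sdiff.1 (mem_inter.1 hi').1).2 (mem_inter.1 hi).2

theorem exists_card_eq_mul_sum_degree_le [DecidableEq ι] (S : ι → Finset U) (M : Finset U)
    {t : ℕ} (ht : t ≤ Fintype.card ι) :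
    ∃ D : Finset ι, #D = t ∧
      t * ∑ i ∈ M \ D.biUnion S, degree S i ≤ Fintype.card ι * #(M ∩ D.biUnion S) := by
  induction t with
  | zero => exact ⟨∅, by simp⟩
  | succ t ih =>
    obtain ⟨D, hDcard, hD⟩ := ih (Nat.le_of_succ_le ht)
    set A := M \ D.biUnion S
    have hA : ∀ j ∈ D, Disjoint A (S j) := fun j hj =>
      disjoint_left.2 fun i hi hij => (mem_sdiff.1 hi).2 (mem_biUnion.2 ⟨j, hj, hij⟩)
    obtain ⟨j, hjD, hj⟩ := exists_notMem_sum_degree_le S A hA (hDcard ▸ ht)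
    refine ⟨insert j D, by rw [card_insert_of_notMem hjD, hDcard], ?_⟩
    have hshrink : M \ (insert j D).biUnion S ⊆ A :=
      sdiff_subset_sdiff subset_rfl (biUnion_subset_biUnion_of_subset_left S (subset_insert j D))
    calc (t + 1) * ∑ i ∈ M \ (insert j D).biUnion S, degree S i
        ≤ t * ∑ i ∈ A, degree S i + ∑ i ∈ A, degree S i := by
          rw [add_one_mul]
          gcongr
      _ ≤ Fintype.card ι * #(M ∩ D.biUnion S) + Fintype.card ι * #(A ∩ S j) :=
          add_le_add hD hj
      _ = Fintype.card ι * #(M ∩ (insert j D).biUnion S) := by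
          rw [biUnion_insert, card_inter_union_eq, mul_add]

theorem mul_sum_degree_le [DecidableEq ι] (S : ι → Finset U) (M : Finset U) {k OPT : ℕ}
    (hk : k ≤ Fintype.card ι) (hOPT : ∀ C : Finset ι, #C = k → #(C.biUnion S) ≤ OPT)
    (hM : ∀ i ∈ M, k * degree S i ≤ Fintype.card ι) :
    k * ∑ i ∈ M, degree S i ≤ 2 * Fintype.card ι * OPT := by
  obtain ⟨D, hDcard, hD⟩ := exists_card_eq_mul_sum_degree_le S M hk
  set B := D.biUnion S
  have hcovered : k * ∑ i ∈ M ∩ B, degree S i ≤ Fintype.card ι * #(M ∩ B) := by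
    rw [mul_sum, mul_comm, ← smul_eq_mul]
    exact sum_le_card_nsmul _ _ _ fun i hi => hM i (mem_inter.1 hi).1
  have hOPT' : #(M ∩ B) ≤ OPT := (card_le_card inter_subset_right).trans (hOPT D hDcard)
  calc k * ∑ i ∈ M, degree S i
      = k * ∑ i ∈ M ∩ B, degree S i + k * ∑ i ∈ M \ B, degree S i := by
        rw [← mul_add, sum_inter_add_sum_sdiff]
    _ ≤ 2 * (Fintype.card ι * #(M ∩ B)) := by omega
    _ ≤ 2 * Fintype.card ι * OPT := by
        rw [← mul_assoc]
        gcongr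

end MaxCoverage

theorem stmt12_general (U : Type*) [DecidableEq U] (d k OPT : ℕ)
    (hk : 1 ≤ k) (hkd : k ≤ d) (S : Fin d → Finset U)
    (hOPT : ∀ C : Finset (Fin d), C.card = k → (C.biUnion S).card ≤ OPT)
    (M : Finset U)
    (hM : ∀ i ∈ M, (k * (Finset.univ.filter fun j : Fin d => i ∈ S j).card : ℝ) < d) :
    ((∑ i ∈ M, (Finset.univ.filter fun j : Fin d => i ∈ S j).card : ℕ) : ℝ)
      ≤ 2 * ((d : ℝ) / k) * OPT := by
  have hsmall : ∀ i ∈ M, k * MaxCoverage.degree S i ≤ Fintype.card (Fin d) := fun i hi => by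
    rw [Fintype.card_fin]
    exact_mod_cast (hM i hi).le
  have key := MaxCoverage.mul_sum_degree_le S M (by rwa [Fintype.card_fin]) hOPT hsmall
  rw [Fintype.card_fin] at key
  have hk' : (0 : ℝ) < k := by exact_mod_cast hk
  rw [mul_div_assoc', div_mul_eq_mul_div, le_div_iff₀ hk', mul_comm]
  exact_mod_cast key

/-- Bound on incidences among small items: if every choice of `k` subsets covers at most
`OPT` items and every item of `M` lies in fewer than `d/k` of the `d` subsets, then the
total number of (item, subset) incidences among items of `M` is at most `2·(d/k)·OPT`. -/
theorem stmt12 (U : Type*) [Fintype U] [DecidableEq U] (d k OPT : ℕ)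
    (hk : 1 ≤ k) (hkd : k ≤ d) (S : Fin d → Finset U)
    (hOPT : ∀ C : Finset (Fin d), C.card = k → (C.biUnion S).card ≤ OPT)
    (M : Finset U)
    (hM : ∀ i ∈ M, (k * (Finset.univ.filter fun j : Fin d => i ∈ S j).card : ℝ) < d) :
    ((∑ i ∈ M, (Finset.univ.filter fun j : Fin d => i ∈ S j).card : ℕ) : ℝ)
      ≤ 2 * ((d : ℝ) / k) * OPT :=
  stmt12_general U d k OPT hk hkd S hOPT M hM
end
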